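/- If r·ln 2 ≤ q, then for all real K ≥ 1, (1 - e^{-q/r})^1 ≤ (1 - e^{-Kq/r})^K; i.e., K = 1 minimizes the Bloom filter false positive probability among K ≥ 1. -/

import Mathlib

/-!
Write `u = e^{-t}`. Then `t · log (1 - e^{-t}) = -log u · log (1 - u)`, and `log u · log (1 - u)`
is increasing on `(0, 1/2]` because its derivative has the sign of `(1 - u) log (1 - u) - u log u`,
which is nonnegative there. Since `t ≥ log 2` means `u ≤ 1/2`, the function `t ↦ t · log (1 - e^{-t})`
is increasing on `[log 2, ∞)`; comparing it at `t = q/r` and `t = Kq/r` and dividing by `q/r`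
gives `log (1 - e^{-q/r}) ≤ K log (1 - e^{-Kq/r})`.
-/

open Real Set

lemma mul_log_le_mul_log_one_sub {u : ℝ} (hu : 0 < u) (hu2 : u ≤ 1 / 2) :
    u * log u ≤ (1 - u) * log (1 - u) := by
  rcases le_or_gt u (exp (-1)) with hsmall | hlarge
  · have hlog : log u ≤ -1 := (log_le_iff_le_exp hu).2 hsmall
    calc u * log u ≤ u * (-1) := mul_le_mul_of_nonneg_left hlog hu.le
      _ = (1 - u) - 1 := by ring
      _ ≤ (1 - u) * log (1 - u) := self_sub_one_le_mul_log (by linarith)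
  · exact mul_log_strictMonoOn.monotoneOn (mem_Ici.2 hlarge.le)
      (mem_Ici.2 (by linarith)) (by linarith)

lemma monotoneOn_log_mul_log_one_sub :
    MonotoneOn (fun u : ℝ => log u * log (1 - u)) (Ioc 0 (1 / 2)) := by
  have hderiv : ∀ u ∈ Ioo (0 : ℝ) (1 / 2), HasDerivAt (fun u : ℝ => log u * log (1 - u))
      (u⁻¹ * log (1 - u) + log u * (-1 / (1 - u))) u := fun u hu =>
    (hasDerivAt_log hu.1.ne').mul
      (((hasDerivAt_id u).const_sub 1).log (show 1 - u ≠ 0 by linarith [hu.2]))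
  apply monotoneOn_of_deriv_nonneg (convex_Ioc 0 (1 / 2))
  · refine ContinuousOn.mul (continuousOn_log.mono fun u hu => hu.1.ne') ?_
    exact (continuousOn_const.sub continuousOn_id).log fun u hu => show 1 - u ≠ 0 by linarith [hu.2]
  · rw [interior_Ioc]
    exact fun u hu => (hderiv u hu).differentiableAt.differentiableWithinAt
  · rw [interior_Ioc]
    intro u hu
    obtain ⟨hu0, hu2⟩ := hu
    have h1u : 0 < 1 - u := by linarith
    rw [(hderiv u ⟨hu0, hu2⟩).deriv]
    have hsplit : u⁻¹ * log (1 - u) + log u * (-1 / (1 - u))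
        = ((1 - u) * log (1 - u) - u * log u) / (u * (1 - u)) := by
      field_simp
      ring
    rw [hsplit]
    exact div_nonneg (by linarith [mul_log_le_mul_log_one_sub hu0 hu2.le]) (by positivity)

lemma one_sub_exp_neg_le_rpow {a K : ℝ} (ha : log 2 ≤ a) (hK : 1 ≤ K) :
    1 - exp (-a) ≤ (1 - exp (-(K * a))) ^ K := by
  have ha0 : 0 < a := (log_pos one_lt_two).trans_le ha
  have hKa : a ≤ K * a := le_mul_of_one_le_left ha0.le hK
  have hu2 : exp (-a) ≤ 1 / 2 := by
    rw [exp_neg, one_div]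
    exact inv_anti₀ two_pos ((exp_log two_pos).symm.le.trans (exp_le_exp.2 ha))
  have hvu : exp (-(K * a)) ≤ exp (-a) := exp_le_exp.2 (neg_le_neg hKa)
  have hu1 : 0 < 1 - exp (-a) := by linarith
  have hv1 : 0 < 1 - exp (-(K * a)) := by linarith
  have hmono := monotoneOn_log_mul_log_one_sub ⟨exp_pos (-(K * a)), hvu.trans hu2⟩
    ⟨exp_pos (-a), hu2⟩ hvu
  simp only [log_exp] at hmono
  have hlog : log (1 - exp (-a)) ≤ log ((1 - exp (-(K * a))) ^ K) := by
    rw [log_rpow hv1]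
    nlinarith
  exact (log_le_log_iff hu1 (rpow_pos_of_pos hv1 K)).1 hlog

theorem bloom_fp_min_at_one_general (r q : ℝ) (hr : 0 < r)
    (h : r * Real.log 2 ≤ q) :
    ∀ K : ℝ, 1 ≤ K →
      (1 - Real.exp (-q / r)) ^ (1:ℝ) ≤ (1 - Real.exp (-(K * q) / r)) ^ K := by
  intro K hK
  have hload : log 2 ≤ q / r := (le_div_iff₀ hr).2 (by linarith)
  rw [rpow_one, neg_div, neg_div, mul_div_assoc]
  exact one_sub_exp_neg_le_rpow hload hK

theorem bloom_fp_min_at_one (r q : ℝ) (hr : 0 < r) (hq : 0 < q)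
    (h : r * Real.log 2 ≤ q) :
    ∀ K : ℝ, 1 ≤ K →
      (1 - Real.exp (-q / r)) ^ (1:ℝ) ≤ (1 - Real.exp (-(K * q) / r)) ^ K :=
  bloom_fp_min_at_one_general r q hr h
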